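/- arXiv:1407.2485 — 2 statements merged into one kernel-verified Lean document; each statement's English description precedes it below -/
import Mathlib

section
/- For t ∈ [0, 1] define the 2×2 matrix P_t = (1/4)·[[3+t, 1−t], [1+t, 3−t]]. Then for every integer L ≥ 2 there exists t ∈ (0, 1) such that there is no strong shift equivalence over ℝ₊ between P_0 and P_t of lag less than L in which every matrix of the chain has size less than L. -/
/-!
Pad every matrix of a strong shift equivalence to size `L` and, working backwards from `P_t`,
conjugate by positive diagonal matrices so that every connecting matrix of a lag `p < L` chain has
entries in `[0, (L + 1) ^ (2 L)]`. Normalized chains form a compact set, so the set `T` of those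
`t` for which `P_t` is reached from some diagonal conjugate of `P_0` (or a limit of them) is closed.
But `1 ∉ T`: `P_1` has the nonnegative eigenvector `e₂` for the eigenvalue `1/2`, an elementary
step `U V ↔ V U` over `ℝ₊` carries such eigenvectors along (`v ↦ U v`), and no limit of diagonal
conjugates of `P_0` has one. Hence every `t < 1` close enough to `1` works.
-/

open Matrix BigOperators

/-- Elementary strong shift equivalence between square real matrices of possibly different
sizes, with all entries of the connecting matrices lying in the set `S ⊆ ℝ`. -/
def ESSE (S : Set ℝ) {m k : ℕ}
    (A : Matrix (Fin m) (Fin m) ℝ) (B : Matrix (Fin k) (Fin k) ℝ) : Prop :=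
  ∃ (U : Matrix (Fin m) (Fin k) ℝ) (V : Matrix (Fin k) (Fin m) ℝ),
    (∀ i j, U i j ∈ S) ∧ (∀ i j, V i j ∈ S) ∧ A = U * V ∧ B = V * U

/-- `SSEls S N A B p` : there is a strong shift equivalence over `S` from `A` to `B` of lag
`p` in which every square matrix of the chain has size (strictly) less than `N`. -/
inductive SSEls (S : Set ℝ) (N : ℕ) :
    ∀ {m k : ℕ}, Matrix (Fin m) (Fin m) ℝ → Matrix (Fin k) (Fin k) ℝ → ℕ → Prop
  | refl {m : ℕ} (hm : m < N) (A : Matrix (Fin m) (Fin m) ℝ) : SSEls S N A A 0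
  | tail {m k l p : ℕ} {A : Matrix (Fin m) (Fin m) ℝ} {B : Matrix (Fin k) (Fin k) ℝ}
      {C : Matrix (Fin l) (Fin l) ℝ} (hl : l < N) :
      SSEls S N A B p → ESSE S B C → SSEls S N A C (p + 1)

/-- The matrix `P_t = (1/4) · [[3+t, 1−t], [1+t, 3−t]]`. -/
noncomputable def Pmat (t : ℝ) : Matrix (Fin 2) (Fin 2) ℝ :=
  (1 / 4 : ℝ) • !![3 + t, 1 - t; 1 + t, 3 - t]

namespace Matrix

def pad {m k : ℕ} (n : ℕ) (A : Matrix (Fin m) (Fin k) ℝ) : Matrix (Fin n) (Fin n) ℝ :=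
  Matrix.of fun a b => if h : (a : ℕ) < m ∧ (b : ℕ) < k then A ⟨a, h.1⟩ ⟨b, h.2⟩ else 0

lemma pad_apply {m k n : ℕ} (A : Matrix (Fin m) (Fin k) ℝ) (a b : Fin n) :
    pad n A a b = if h : (a : ℕ) < m ∧ (b : ℕ) < k then A ⟨a, h.1⟩ ⟨b, h.2⟩ else 0 :=
  rfl

lemma pad_mul {m k l n : ℕ} (hk : k ≤ n) (A : Matrix (Fin m) (Fin k) ℝ)
    (B : Matrix (Fin k) (Fin l) ℝ) : pad n (A * B) = pad n A * pad n B := by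
  ext a b
  rw [Matrix.mul_apply, ← Fintype.sum_of_injective (Fin.castLE hk) (Fin.castLE_injective hk) _ _ ?_
    fun _ => rfl]
  · by_cases h : (a : ℕ) < m ∧ (b : ℕ) < l
    · simp [pad_apply, h, Matrix.mul_apply]
    · rw [pad_apply, dif_neg h]
      refine (Finset.sum_eq_zero fun c _ => ?_).symm
      simp only [pad_apply]
      split_ifs <;> simp_all
  · rintro c hc
    have : ¬ (c : ℕ) < k := fun h => hc ⟨⟨c, h⟩, rfl⟩
    simp [pad_apply, this]

lemma pad_nonneg {m k n : ℕ} {A : Matrix (Fin m) (Fin k) ℝ} (hA : ∀ i j, 0 ≤ A i j)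
    (a b : Fin n) : 0 ≤ pad n A a b := by
  rw [pad_apply]
  split_ifs
  exacts [hA _ _, le_rfl]

lemma continuous_pad {m k n : ℕ} : Continuous (pad n : Matrix (Fin m) (Fin k) ℝ → _) :=
  continuous_pi fun a => continuous_pi fun b => by
    simp only [pad_apply]
    split_ifs
    exacts [by fun_prop, continuous_const]

lemma mul_apply_mem_Icc {ι κ : Type*} [Fintype κ] {U : Matrix ι κ ℝ} {V : Matrix κ ι ℝ} {α β : ℝ}
    (hU : ∀ a c, U a c ∈ Set.Icc 0 α) (hV : ∀ c b, V c b ∈ Set.Icc 0 β) (a b : ι) :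
    (U * V) a b ∈ Set.Icc 0 (Fintype.card κ * (α * β)) := by
  rw [Matrix.mul_apply]
  refine ⟨Finset.sum_nonneg fun c _ => mul_nonneg (hU a c).1 (hV c b).1, ?_⟩
  calc ∑ c, U a c * V c b ≤ ∑ _c : κ, α * β :=
        Finset.sum_le_sum fun c _ =>
          mul_le_mul (hU a c).2 (hV c b).2 (hV c b).1 ((hU a c).1.trans (hU a c).2)
    _ = Fintype.card κ * (α * β) := by simp

lemma sum_col_mul_le_sum_col_mul {ι κ : Type*} [Fintype ι] [Fintype κ] {V : Matrix ι κ ℝ}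
    {U : Matrix κ ι ℝ} (hV : ∀ i k, 0 ≤ V i k) (hU : ∀ k b, 0 ≤ U k b) (a : κ) (b : ι) :
    (∑ i, V i a) * U a b ≤ ∑ i, (V * U) i b :=
  calc (∑ i, V i a) * U a b = ∑ i, V i a * U a b := Finset.sum_mul _ _ _
    _ ≤ ∑ i, (V * U) i b := Finset.sum_le_sum fun i _ =>
        Finset.single_le_sum (f := fun k => V i k * U k b)
          (fun k _ => mul_nonneg (hV i k) (hU k b)) (Finset.mem_univ a)

section

variable {ι : Type*} [Fintype ι]

def HasNonnegEigenvector (A : Matrix ι ι ℝ) (μ : ℝ) : Prop :=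
  ∃ v : ι → ℝ, 0 ≤ v ∧ v ≠ 0 ∧ A *ᵥ v = μ • v

lemma HasNonnegEigenvector.of_mul_swap {κ : Type*} [Fintype κ] {U : Matrix ι κ ℝ}
    {V : Matrix κ ι ℝ} {μ : ℝ} (h : HasNonnegEigenvector (V * U) μ) (hU : ∀ a b, 0 ≤ U a b)
    (hμ : μ ≠ 0) : HasNonnegEigenvector (U * V) μ := by
  obtain ⟨v, hv0, hv, hVU⟩ := h
  refine ⟨U *ᵥ v, fun a => Finset.sum_nonneg fun b _ => mul_nonneg (hU a b) (hv0 b),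
    fun h0 => hv ?_, ?_⟩
  · have := congrArg (V *ᵥ ·) h0
    simpa [mulVec_mulVec, hVU, hμ] using this
  · rw [← mulVec_mulVec, mulVec_mulVec (M := V), hVU, mulVec_smul]

variable [DecidableEq ι]

noncomputable def diagConj (E : ι → ℝ) (A : Matrix ι ι ℝ) : Matrix ι ι ℝ :=
  diagonal E * A * diagonal E⁻¹

lemma diagConj_apply (E : ι → ℝ) (A : Matrix ι ι ℝ) (a b : ι) :
    diagConj E A a b = E a * A a b / E b := by
  simp [diagConj, div_eq_mul_inv]

@[simp] lemma diagConj_one (A : Matrix ι ι ℝ) : diagConj 1 A = A := by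
  simp [diagConj]

lemma diagonal_inv_mul_diagonal {E : ι → ℝ} (hE : ∀ i, E i ≠ 0) :
    diagonal E⁻¹ * diagonal E = 1 := by
  rw [diagonal_mul_diagonal, ← diagonal_one]
  exact congrArg diagonal (funext fun i => inv_mul_cancel₀ (hE i))

theorem exists_diagConj_bounded_esse {U V : Matrix ι ι ℝ} (hU : ∀ a b, 0 ≤ U a b)
    (hV : ∀ a b, 0 ≤ V a b) {E : ι → ℝ} (hE : ∀ i, 0 < E i) {c : ℝ}
    (hc : ∀ a b, diagConj E (V * U) a b ≤ c) :
    ∃ F : ι → ℝ, (∀ i, 0 < F i) ∧ ∃ U' V' : Matrix ι ι ℝ,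
      (∀ a b, U' a b ∈ Set.Icc 0 (Fintype.card ι * c + 1)) ∧ (∀ a b, V' a b ∈ Set.Icc 0 1) ∧
      U' * V' = diagConj F (U * V) ∧ V' * U' = diagConj E (V * U) := by
  set U₁ := U * diagonal E⁻¹
  set V₁ := diagonal E * V
  have hU₁ : ∀ a b, 0 ≤ U₁ a b := fun a b => by
    simpa [U₁] using mul_nonneg (hU a b) (inv_nonneg.2 (hE b).le)
  have hV₁ : ∀ a b, 0 ≤ V₁ a b := fun a b => by
    simpa [V₁] using mul_nonneg (hE a).le (hV a b)
  have hV₁U₁ : V₁ * U₁ = diagConj E (V * U) := by simp only [V₁, U₁, diagConj, Matrix.mul_assoc]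
  -- Column sums of `E V`, plus a term keeping row `j` of `F U E⁻¹` bounded when column `j`
  -- of `V` vanishes.
  set F : ι → ℝ := fun j => ∑ i, V₁ i j + (1 + ∑ k, U₁ j k)⁻¹
  have hrow : ∀ j, 0 < 1 + ∑ k, U₁ j k := fun j =>
    add_pos_of_pos_of_nonneg one_pos (Finset.sum_nonneg fun k _ => hU₁ j k)
  have hcol : ∀ i j, V₁ i j ≤ ∑ i, V₁ i j := fun i j =>
    Finset.single_le_sum (fun i _ => hV₁ i j) (Finset.mem_univ i)
  have hF : ∀ j, 0 < F j := fun j =>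
    add_pos_of_nonneg_of_pos (Finset.sum_nonneg fun i _ => hV₁ i j) (inv_pos.2 (hrow j))
  refine ⟨F, hF, diagonal F * U₁, V₁ * diagonal F⁻¹, fun a b => ?_, fun a b => ?_, ?_, ?_⟩
  · rw [diagonal_mul]
    refine ⟨mul_nonneg (hF a).le (hU₁ a b), ?_⟩
    have hbig : (∑ i, V₁ i a) * U₁ a b ≤ Fintype.card ι * c :=
      calc (∑ i, V₁ i a) * U₁ a b ≤ ∑ i, (V₁ * U₁) i b := sum_col_mul_le_sum_col_mul hV₁ hU₁ a b
        _ ≤ ∑ _i : ι, c := Finset.sum_le_sum fun i _ => hV₁U₁ ▸ hc i b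
        _ = Fintype.card ι * c := by simp
    have hsmall : (1 + ∑ k, U₁ a k)⁻¹ * U₁ a b ≤ 1 := by
      rw [inv_mul_le_iff₀ (hrow a), mul_one]
      linarith [Finset.single_le_sum (fun k _ => hU₁ a k) (Finset.mem_univ b)]
    calc F a * U₁ a b = (∑ i, V₁ i a) * U₁ a b + (1 + ∑ k, U₁ a k)⁻¹ * U₁ a b := add_mul _ _ _
      _ ≤ Fintype.card ι * c + 1 := add_le_add hbig hsmall
  · rw [mul_diagonal, Pi.inv_apply]
    refine ⟨mul_nonneg (hV₁ a b) (inv_nonneg.2 (hF b).le), ?_⟩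
    rw [mul_inv_le_iff₀ (hF b), one_mul]
    exact (hcol a b).trans (le_add_of_nonneg_right (inv_nonneg.2 (hrow b).le))
  · simp only [U₁, V₁, diagConj, Matrix.mul_assoc]
    rw [← Matrix.mul_assoc (diagonal E⁻¹), diagonal_inv_mul_diagonal fun i => (hE i).ne',
      Matrix.one_mul]
  · simp only [U₁, V₁, diagConj, Matrix.mul_assoc]
    rw [← Matrix.mul_assoc (diagonal F⁻¹), diagonal_inv_mul_diagonal fun i => (hF i).ne',
      Matrix.one_mul]

end

end Matrix

open Matrix

lemma SSEls.size_right_lt {S : Set ℝ} {N m k p : ℕ} {A : Matrix (Fin m) (Fin m) ℝ}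
    {B : Matrix (Fin k) (Fin k) ℝ} (h : SSEls S N A B p) : k < N := by
  cases h with
  | refl hm => exact hm
  | tail hl => exact hl

section

variable {ι : Type*} [Fintype ι]

/-- An infinite chain of elementary strong shift equivalences `U i * V i = V (i+1) * U (i+1)`,
indexed backwards from its last matrix `V 0 * U 0`, with all connecting entries in `[0, b]`. -/
def IsBoundedESSEChain (b : ℝ) (U V : ℕ → Matrix ι ι ℝ) : Prop :=
  (∀ i j k, U i j k ∈ Set.Icc 0 b ∧ V i j k ∈ Set.Icc 0 b) ∧
    ∀ i, U i * V i = V (i + 1) * U (i + 1)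

lemma isBoundedESSEChain_const [DecidableEq ι] {A : Matrix ι ι ℝ} {b : ℝ}
    (hA : ∀ j k, A j k ∈ Set.Icc 0 b) (hb : 1 ≤ b) :
    IsBoundedESSEChain b (fun _ => A) (fun _ => 1) := by
  refine ⟨fun _ j k => ⟨hA j k, ?_⟩, fun _ => by simp⟩
  dsimp only
  rw [one_apply]
  split_ifs <;> constructor <;> linarith

lemma IsBoundedESSEChain.mono {U V : ℕ → Matrix ι ι ℝ} {b b' : ℝ}
    (h : IsBoundedESSEChain b U V) (hb : b ≤ b') : IsBoundedESSEChain b' U V :=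
  ⟨fun i j k => ⟨Set.Icc_subset_Icc_right hb (h.1 i j k).1,
    Set.Icc_subset_Icc_right hb (h.1 i j k).2⟩, h.2⟩

lemma IsBoundedESSEChain.cons {U V : ℕ → Matrix ι ι ℝ} {U₀ V₀ : Matrix ι ι ℝ} {b : ℝ}
    (h : IsBoundedESSEChain b U V) (hU₀ : ∀ j k, U₀ j k ∈ Set.Icc 0 b)
    (hV₀ : ∀ j k, V₀ j k ∈ Set.Icc 0 b) (hUV₀ : U₀ * V₀ = V 0 * U 0) :
    IsBoundedESSEChain b (fun | 0 => U₀ | i + 1 => U i) (fun | 0 => V₀ | i + 1 => V i) := by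
  refine ⟨fun i j k => ?_, fun i => ?_⟩ <;> cases i
  exacts [⟨hU₀ j k, hV₀ j k⟩, h.1 _ j k, hUV₀, h.2 _]

theorem isClosed_setOf_isBoundedESSEChain_ends (b : ℝ) (N : ℕ) {C : Set (Matrix ι ι ℝ)}
    (hC : IsClosed C) :
    IsClosed {X | ∃ U V, IsBoundedESSEChain b U V ∧ U N * V N ∈ C ∧ V 0 * U 0 = X} := by
  set K := {w : (ℕ → Matrix ι ι ℝ) × (ℕ → Matrix ι ι ℝ) |
    IsBoundedESSEChain b w.1 w.2 ∧ w.1 N * w.2 N ∈ C}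
  have hbox : IsCompact (Set.univ.pi fun _ : ℕ => Set.univ.pi fun _ : ι =>
      Set.univ.pi fun _ : ι => Set.Icc (0 : ℝ) b) :=
    isCompact_univ_pi fun _ => isCompact_univ_pi fun _ => isCompact_univ_pi fun _ => isCompact_Icc
  have hK : IsClosed K := by
    simp only [K, IsBoundedESSEChain, Set.ofPred_and, Set.ofPred_forall]
    refine ((isClosed_iInter fun i => isClosed_iInter fun j => isClosed_iInter fun k =>
      ?_).inter (isClosed_iInter fun i => ?_)).inter (hC.preimage (by fun_prop))
    · exact (isClosed_Icc.preimage (by fun_prop)).inter (isClosed_Icc.preimage (by fun_prop))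
    · exact isClosed_eq (by fun_prop) (by fun_prop)
  have hKc : IsCompact K := (hbox.prod hbox).of_isClosed_subset hK fun w hw =>
    ⟨fun i _ j _ k _ => (hw.1.1 i j k).1, fun i _ j _ k _ => (hw.1.1 i j k).2⟩
  convert (hKc.image (f := fun w => w.2 0 * w.1 0) (by fun_prop)).isClosed using 1
  ext X
  simp [K, and_assoc]

lemma IsBoundedESSEChain.hasNonnegEigenvector {U V : ℕ → Matrix ι ι ℝ} {b μ : ℝ}
    (h : IsBoundedESSEChain b U V) (h0 : HasNonnegEigenvector (V 0 * U 0) μ) (hμ : μ ≠ 0) :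
    ∀ i, HasNonnegEigenvector (U i * V i) μ
  | 0 => h0.of_mul_swap (fun a c => (h.1 0 a c).1.1) hμ
  | i + 1 => ((h.2 i) ▸ h.hasNonnegEigenvector h0 hμ i).of_mul_swap
      (fun a c => (h.1 (i + 1) a c).1.1) hμ

end

/-- Past step `p` the chain is continued by the constant steps `U i = A`, `V i = 1`, so that
chains of all lags `≤ i` are read off at the same index `i`. -/
theorem SSEls.exists_isBoundedESSEChain {N m k p : ℕ} {A : Matrix (Fin m) (Fin m) ℝ}
    {C : Matrix (Fin k) (Fin k) ℝ} (h : SSEls {x : ℝ | 0 ≤ x} N A C p) {E : Fin N → ℝ}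
    (hE : ∀ i, 0 < E i) {c : ℝ} (hc1 : 1 ≤ c)
    (hc : ∀ a b, diagConj E (pad N C) a b ∈ Set.Icc 0 c) :
    ∃ D : Fin N → ℝ, (∀ i, 0 < D i) ∧ ∃ U V : ℕ → Matrix (Fin N) (Fin N) ℝ,
      IsBoundedESSEChain ((((N : ℝ) + 1) ^ 2) ^ p * c) U V ∧
      V 0 * U 0 = diagConj E (pad N C) ∧ ∀ i, p ≤ i → U i * V i = diagConj D (pad N A) := by
  induction h generalizing E c with
  | refl _ A =>
    refine ⟨E, hE, fun _ => diagConj E (pad N A), fun _ => 1, ?_, by simp, fun _ _ => by simp⟩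
    simpa using isBoundedESSEChain_const hc hc1
  | @tail _ _ p _ _ _ hl hAB hBC ih =>
    obtain ⟨U, V, hU, hV, rfl, rfl⟩ := hBC
    -- `β` bounds the growth of the entry bound in one step: `N c + 1` for `U'`, and
    -- `N (N c + 1)` for the middle matrix `U' V'`.
    set β : ℝ := ((N : ℝ) + 1) ^ 2
    have hN : (N : ℝ) + 1 ≤ β := by
      simp only [β]
      nlinarith [(N.cast_nonneg : (0 : ℝ) ≤ N)]
    have hβ : 1 ≤ β := by linarith [(N.cast_nonneg : (0 : ℝ) ≤ N)]
    rw [pad_mul hAB.size_right_lt.le] at hc ⊢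
    obtain ⟨F, hF, U', V', hU', hV', hU'V', hV'U'⟩ :=
      exists_diagConj_bounded_esse (pad_nonneg hU) (pad_nonneg hV) hE fun a b => (hc a b).2
    rw [← pad_mul hl.le] at hU'V'
    have hmid : ∀ a b, diagConj F (pad N (U * V)) a b ∈ Set.Icc 0 (β * c) := by
      intro a b
      rw [← hU'V']
      refine Set.Icc_subset_Icc_right ?_ (mul_apply_mem_Icc hU' hV' a b)
      simp only [Fintype.card_fin, mul_one, β]
      nlinarith
    obtain ⟨D, hD, U₀, V₀, hchain, hend, hstart⟩ := ih hF (by nlinarith) hmid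
    have hbound : (N : ℝ) * c + 1 ≤ β ^ (p + 1) * c := by
      calc (N : ℝ) * c + 1 ≤ β * c := by nlinarith
        _ ≤ β ^ (p + 1) * c := by gcongr; exact le_self_pow₀ hβ (by omega)
    rw [show β ^ p * (β * c) = β ^ (p + 1) * c by ring] at hchain
    refine ⟨D, hD, fun | 0 => U' | i + 1 => U₀ i, fun | 0 => V' | i + 1 => V₀ i,
      hchain.cons (fun j k => ?_) (fun j k => ?_) (hU'V'.trans hend.symm), hV'U', ?_⟩
    · exact Set.Icc_subset_Icc_right (by simpa using hbound) (hU' j k)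
    · exact Set.Icc_subset_Icc_right (one_le_mul_of_one_le_of_one_le (one_le_pow₀ hβ) hc1)
        (hV' j k)
    · rintro (_ | i) hi
      · omega
      · exact hstart i (by omega)

lemma continuous_Pmat : Continuous Pmat :=
  continuous_pi fun i => continuous_pi fun j => by
    fin_cases i <;> fin_cases j <;> simp only [Pmat] <;> fun_prop

lemma pad_Pmat_mem_Icc {n : ℕ} {t : ℝ} (ht0 : 0 ≤ t) (ht1 : t ≤ 1) (a b : Fin n) :
    pad n (Pmat t) a b ∈ Set.Icc 0 1 := by
  have hP : ∀ i j, Pmat t i j ∈ Set.Icc 0 1 := by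
    intro i j
    fin_cases i <;> fin_cases j <;> simp [Pmat] <;> constructor <;> linarith
  rw [pad_apply]
  split_ifs
  exacts [hP _ _, ⟨le_rfl, zero_le_one⟩]

/-- Closed conditions satisfied by every positive diagonal conjugate of the padded `P_0`; unlike
the set of those conjugates, this set also contains their limits. -/
def p0Class (n : ℕ) : Set (Matrix (Fin (n + 2)) (Fin (n + 2)) ℝ) :=
  {A | A 0 0 = 3 / 4 ∧ 0 ≤ A 0 1 ∧ A 0 1 * A 1 0 = 1 / 16 ∧
    (∀ b : Fin n, A 0 b.succ.succ = 0) ∧ ∀ (a : Fin n) b, A a.succ.succ b = 0}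

lemma isClosed_p0Class (n : ℕ) : IsClosed (p0Class n) := by
  simp only [p0Class, Set.ofPred_and, Set.ofPred_forall]
  refine (isClosed_eq (by fun_prop) (by fun_prop)).inter ((isClosed_le (by fun_prop)
    (by fun_prop)).inter ((isClosed_eq (by fun_prop) (by fun_prop)).inter
    ((isClosed_iInter fun b => ?_).inter (isClosed_iInter fun a => isClosed_iInter fun b => ?_))))
  all_goals exact isClosed_eq (by fun_prop) (by fun_prop)

lemma not_hasNonnegEigenvector_half_of_mem_p0Class {n : ℕ}
    {A : Matrix (Fin (n + 2)) (Fin (n + 2)) ℝ} (hA : A ∈ p0Class n) :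
    ¬ HasNonnegEigenvector A (1 / 2) := by
  rintro ⟨v, hv0, hv, hAv⟩
  obtain ⟨h00, h01, h0110, hrow0, hrows⟩ := hA
  have hrow : ∀ a, ∑ b, A a b * v b = 1 / 2 * v a := fun a => congrFun hAv a
  have hvs : ∀ a : Fin n, v a.succ.succ = 0 := fun a => by
    have := hrow a.succ.succ
    simp [hrows] at this
    linarith
  have h0 := hrow 0
  simp only [Fin.sum_univ_succ, hrow0, h00, zero_mul, Finset.sum_const_zero, add_zero,
    Fin.succ_zero_eq_one] at h0
  have hv₀ : v 0 = 0 := by linarith [show 0 ≤ v 0 from hv0 0, mul_nonneg h01 (hv0 1)]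
  have hv₁ : v 1 = 0 := by
    have hA01 : A 0 1 ≠ 0 := by
      rintro h
      simp [h] at h0110
    exact (mul_eq_zero.1 (by linarith : A 0 1 * v 1 = 0)).resolve_left hA01
  refine hv (funext fun a => ?_)
  rcases Fin.eq_zero_or_eq_succ a with rfl | ⟨a, rfl⟩
  · exact hv₀
  rcases Fin.eq_zero_or_eq_succ a with rfl | ⟨a, rfl⟩
  · exact hv₁
  · exact hvs a

lemma diagConj_pad_Pmat_zero_mem_p0Class {n : ℕ} {D : Fin (n + 2) → ℝ} (hD : ∀ i, 0 < D i) :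
    diagConj D (pad (n + 2) (Pmat 0)) ∈ p0Class n := by
  have hD₀ := hD 0
  have hD₁ := hD 1
  refine ⟨?_, ?_, ?_, fun b => ?_, fun a b => ?_⟩ <;> simp [diagConj_apply, pad_apply, Pmat]
  · field_simp
  · positivity
  · field_simp
    norm_num

lemma hasNonnegEigenvector_pad_Pmat_one (n : ℕ) :
    HasNonnegEigenvector (pad (n + 2) (Pmat 1)) (1 / 2) := by
  refine ⟨Pi.single 1 1, ?_, ?_, ?_⟩
  · exact Pi.single_nonneg.2 zero_le_one
  · simp
  · ext a
    rcases Fin.eq_zero_or_eq_succ a with rfl | ⟨a, rfl⟩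
    · simp [pad_apply, Pmat]
    rcases Fin.eq_zero_or_eq_succ a with rfl | ⟨a, rfl⟩
    · simp [pad_apply, Pmat]
      norm_num
    · simp [pad_apply, Pmat, Fin.succ_succ_ne_one]

/-- For every integer `L ≥ 2` there exists `t ∈ (0, 1)` such that there is
no strong shift equivalence over `ℝ₊` between `P_0` and `P_t` of lag less than `L` in which
every matrix of the chain has size less than `L`. -/
theorem stmt16 (L : ℕ) (hL : 2 ≤ L) :
    ∃ t : ℝ, 0 < t ∧ t < 1 ∧
      ¬ ∃ p : ℕ, p < L ∧ SSEls {x : ℝ | 0 ≤ x} L (Pmat 0) (Pmat t) p := by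
  obtain ⟨n, rfl⟩ : ∃ n, L = n + 2 := ⟨L - 2, by omega⟩
  set b : ℝ := ((((n + 2 : ℕ) : ℝ) + 1) ^ 2) ^ (n + 2)
  set T := pad (n + 2) ∘ Pmat ⁻¹' {X | ∃ U V, IsBoundedESSEChain b U V ∧
    U (n + 2) * V (n + 2) ∈ p0Class n ∧ V 0 * U 0 = X}
  have hT : IsClosed T := (isClosed_setOf_isBoundedESSEChain_ends b (n + 2)
    (isClosed_p0Class n)).preimage (continuous_pad.comp continuous_Pmat)
  have h1T : 1 ∉ T := fun ⟨U, V, hUV, hstart, hend⟩ =>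
    not_hasNonnegEigenvector_half_of_mem_p0Class hstart <|
      hUV.hasNonnegEigenvector (hend ▸ hasNonnegEigenvector_pad_Pmat_one n) (by norm_num) _
  obtain ⟨t, htT, ht⟩ := Filter.nonempty_of_mem (Filter.inter_mem
    (mem_nhdsWithin_of_mem_nhds (hT.isOpen_compl.mem_nhds h1T)) (Ioo_mem_nhdsLT zero_lt_one))
  refine ⟨t, ht.1, ht.2, fun ⟨p, hp, hsse⟩ => htT ?_⟩
  obtain ⟨D, hD, U, V, hUV, hend, hstart⟩ := hsse.exists_isBoundedESSEChain (E := 1)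
    (fun _ => one_pos) le_rfl fun a b => by simpa using pad_Pmat_mem_Icc ht.1.le ht.2.le a b
  refine ⟨U, V, hUV.mono ?_, hstart _ hp.le ▸ diagConj_pad_Pmat_zero_mem_p0Class hD,
    by simpa using hend⟩
  rw [mul_one]
  exact pow_le_pow_right₀ (one_le_pow₀ (le_add_of_nonneg_left (Nat.cast_nonneg _))) hp.le
end

section
/- Let A be an m×m and B an n×n irreducible nonnegative real matrix, let λ > 0, and let v ∈ ℝ^m and w ∈ ℝ^n be positive (right) eigenvectors with Av = λv and Bw = λw. Write D = diag(v), E = diag(w), and let 𝒮(A) = (1/λ)D⁻¹AD and 𝒮(B) = (1/λ)E⁻¹BE denote the stochasticizations. If there exist nonnegative real matrices X (m×n) and Y (n×m) with A = XY and B = YX, then there exist generalized row stochastic matrices R (m×n) and S (n×m) — i.e., nonnegative matrices each of whose row sums equals 1 — such that 𝒮(A) = RS and 𝒮(B) = SR. In particular 𝒮(A) and 𝒮(B) are elementary strong shift equivalent over ℝ₊. -/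
/-!
Put `u := Y v`. Conjugating by `D = diag(v)` and `U = diag(u)` turns `X` and `Y` into the
generalized row stochastic matrices `R = (λD)⁻¹ X U` and `S = U⁻¹ Y D`, since `X u = A v = λ v`
and `Y v = u`; their products are `λ⁻¹ D⁻¹ A D` and `λ⁻¹ U⁻¹ B U`. As `B u = Y X Y v = λ u`,
Perron–Frobenius uniqueness for the irreducible matrix `B` makes `u` a positive multiple of `w`,
and conjugating by `U` is then the same as conjugating by `E = diag(w)`.
-/

open Matrix

namespace Matrix

variable {ι κ K : Type*} [Fintype ι] [Fintype κ] [Field K]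

def IsGenRowStochastic [LE K] (R : Matrix ι κ K) : Prop :=
  (∀ i j, 0 ≤ R i j) ∧ ∀ i, ∑ j, R i j = 1

section Diagonal

variable [DecidableEq ι]

lemma inv_diagonal_of_ne_zero {d : ι → K} (hd : ∀ i, d i ≠ 0) :
    (diagonal d)⁻¹ = diagonal d⁻¹ := by
  refine inv_eq_left_inv ?_
  rw [diagonal_mul_diagonal, ← diagonal_one]
  exact congrArg diagonal (funext fun i => inv_mul_cancel₀ (hd i))

lemma isUnit_det_diagonal_of_ne_zero {d : ι → K} (hd : ∀ i, d i ≠ 0) :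
    IsUnit (diagonal d).det := by
  rw [det_diagonal]
  exact (Finset.prod_ne_zero_iff.mpr fun i _ => hd i).isUnit

lemma inv_diagonal_smul {d : ι → K} (hd : ∀ i, d i ≠ 0) (c : K) :
    (diagonal (c • d))⁻¹ = c⁻¹ • (diagonal d)⁻¹ := by
  by_cases hc : c = 0
  · simp [hc]
  rw [inv_diagonal_of_ne_zero (d := c • d) fun i => smul_ne_zero hc (hd i),
    inv_diagonal_of_ne_zero hd, ← diagonal_smul]
  exact congrArg diagonal (funext fun i => by simp [mul_comm])

lemma inv_diagonal_smul_mul_mul_diagonal_smul {d : ι → K} (hd : ∀ i, d i ≠ 0) {c : K}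
    (hc : c ≠ 0) (M : Matrix ι ι K) :
    (diagonal (c • d))⁻¹ * M * diagonal (c • d) = (diagonal d)⁻¹ * M * diagonal d := by
  rw [inv_diagonal_smul hd, diagonal_smul, Matrix.smul_mul, Matrix.smul_mul, Matrix.mul_smul,
    smul_smul, inv_mul_cancel₀ hc, one_smul]

end Diagonal

lemma pow_mulVec_of_mulVec_eq_smul [DecidableEq ι] {B : Matrix ι ι K} {x : ι → K} {c : K}
    (hx : B *ᵥ x = c • x) (k : ℕ) : (B ^ k) *ᵥ x = c ^ k • x := by
  induction k with
  | zero => simp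
  | succ k ih => rw [pow_succ, ← mulVec_mulVec, hx, mulVec_smul, ih, smul_smul, ← pow_succ']

variable [LinearOrder K] [IsStrictOrderedRing K]

lemma isGenRowStochastic_inv_diagonal_mul_mul_diagonal [DecidableEq ι] [DecidableEq κ]
    {M : Matrix ι κ K} (hM : ∀ i j, 0 ≤ M i j) {d : ι → K} {e : κ → K} (hd : ∀ i, 0 < d i)
    (he : ∀ j, 0 < e j) (hMe : M *ᵥ e = d) :
    IsGenRowStochastic ((diagonal d)⁻¹ * M * diagonal e) := by
  rw [inv_diagonal_of_ne_zero fun i => (hd i).ne']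
  refine ⟨fun i j => ?_, fun i => ?_⟩
  · simp only [mul_diagonal, diagonal_mul, Pi.inv_apply]
    have := hd i
    have := he j
    have := hM i j
    positivity
  · simp only [mul_diagonal, diagonal_mul, Pi.inv_apply, mul_assoc, ← Finset.mul_sum]
    rw [show ∑ j, M i j * e j = d i from congrFun hMe i, inv_mul_cancel₀ (hd i).ne']

lemma eq_zero_of_mulVec_eq_smul_of_apply_eq_zero [DecidableEq ι] {B : Matrix ι ι K}
    (hB : ∀ i j, 0 ≤ B i j) (hirr : ∀ i j, ∃ k : ℕ, 0 < (B ^ k) i j) {z : ι → K}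
    (hz : ∀ j, 0 ≤ z j) {c : K} (hBz : B *ᵥ z = c • z) {j₀ : ι} (hj₀ : z j₀ = 0) : z = 0 := by
  funext j
  obtain ⟨k, hk⟩ := hirr j₀ j
  have hsum : ((B ^ k) *ᵥ z) j₀ = 0 := by
    rw [pow_mulVec_of_mulVec_eq_smul hBz, Pi.smul_apply, hj₀, smul_zero]
  have hterm : (B ^ k) j₀ j * z j ≤ ((B ^ k) *ᵥ z) j₀ :=
    Finset.single_le_sum (f := fun l => (B ^ k) j₀ l * z l)
      (fun l _ => mul_nonneg (pow_apply_nonneg hB k j₀ l) (hz l)) (Finset.mem_univ j)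
  rw [hsum] at hterm
  exact le_antisymm (nonpos_of_mul_nonpos_right hterm hk) (hz j)

/-- `u - t • w` with `t = min u / w` is a nonnegative eigenvector vanishing somewhere. -/
lemma exists_eq_smul_of_mulVec_eq_smul [DecidableEq ι] [Nonempty ι] {B : Matrix ι ι K}
    (hB : ∀ i j, 0 ≤ B i j) (hirr : ∀ i j, ∃ k : ℕ, 0 < (B ^ k) i j) {c : K} {w : ι → K}
    (hw : ∀ j, 0 < w j) (hBw : B *ᵥ w = c • w) {u : ι → K} (hBu : B *ᵥ u = c • u) :
    ∃ t : K, u = t • w := by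
  obtain ⟨j₀, hj₀⟩ := Finite.exists_min fun j => u j / w j
  refine ⟨u j₀ / w j₀, sub_eq_zero.mp ?_⟩
  refine eq_zero_of_mulVec_eq_smul_of_apply_eq_zero hB hirr (fun j => ?_) (c := c) ?_ (j₀ := j₀) ?_
  · simpa using (le_div_iff₀ (hw j)).mp (hj₀ j)
  · rw [mulVec_sub, mulVec_smul, hBu, hBw, smul_sub, smul_comm c]
  · simp [div_mul_cancel₀ _ (hw j₀).ne']

lemma exists_pos_mulVec_eq_smul [DecidableEq κ] {X : Matrix ι κ K} {Y : Matrix κ ι K}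
    (hX : ∀ i j, 0 ≤ X i j) (hY : ∀ i j, 0 ≤ Y i j)
    (hirr : ∀ i j, ∃ k : ℕ, 0 < ((Y * X) ^ k) i j) {c : K} (hc : c ≠ 0) {v : ι → K}
    (hv : ∀ i, 0 < v i) (hXYv : (X * Y) *ᵥ v = c • v) {w : κ → K} (hw : ∀ j, 0 < w j)
    (hYXw : (Y * X) *ᵥ w = c • w) :
    ∃ t : K, 0 < t ∧ Y *ᵥ v = t • w := by
  rcases isEmpty_or_nonempty κ with hκ | hκ
  · exact ⟨1, one_pos, Subsingleton.elim _ _⟩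
  have hYX : ∀ i j, 0 ≤ (Y * X) i j := fun i j =>
    Finset.sum_nonneg fun l _ => mul_nonneg (hY i l) (hX l j)
  have hYXu : (Y * X) *ᵥ (Y *ᵥ v) = c • (Y *ᵥ v) := by
    rw [mulVec_mulVec, Matrix.mul_assoc, ← mulVec_mulVec, hXYv, mulVec_smul]
  obtain ⟨t, ht⟩ := exists_eq_smul_of_mulVec_eq_smul hYX hirr hw hYXw hYXu
  obtain ⟨j⟩ := hκ
  have ht_nonneg : 0 ≤ t := by
    have hYv : 0 ≤ (Y *ᵥ v) j := Finset.sum_nonneg fun i _ => mul_nonneg (hY j i) (hv i).le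
    rw [ht] at hYv
    exact nonneg_of_mul_nonneg_left hYv (hw j)
  refine ⟨t, ht_nonneg.lt_of_ne ?_, ht⟩
  rintro rfl
  -- `Y v = 0` forces `c v = X Y v = 0`, so `ι` is empty, so `Y X = 0`, contradicting `c w ≠ 0`.
  have hι : IsEmpty ι := ⟨fun i => mul_ne_zero hc (hv i).ne' <| by
    simpa [← mulVec_mulVec, ht] using (congrFun hXYv i).symm⟩
  simpa [mulVec, dotProduct, Matrix.mul_apply, hc, (hw j).ne'] using congrFun hYXw j

lemma exists_isGenRowStochastic_mul_eq [DecidableEq ι] [DecidableEq κ] {X : Matrix ι κ K}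
    {Y : Matrix κ ι K} (hX : ∀ i j, 0 ≤ X i j) (hY : ∀ i j, 0 ≤ Y i j) {c : K} (hc : 0 < c)
    {v : ι → K} (hv : ∀ i, 0 < v i) {u : κ → K} (hu : ∀ j, 0 < u j) (hYv : Y *ᵥ v = u)
    (hXu : X *ᵥ u = c • v) :
    ∃ (R : Matrix ι κ K) (S : Matrix κ ι K), IsGenRowStochastic R ∧ IsGenRowStochastic S ∧
      R * S = c⁻¹ • ((diagonal v)⁻¹ * (X * Y) * diagonal v) ∧
      S * R = c⁻¹ • ((diagonal u)⁻¹ * (Y * X) * diagonal u) := by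
  have hD := isUnit_det_diagonal_of_ne_zero fun i => (hv i).ne'
  have hU := isUnit_det_diagonal_of_ne_zero fun j => (hu j).ne'
  refine ⟨(diagonal (c • v))⁻¹ * X * diagonal u, (diagonal u)⁻¹ * Y * diagonal v,
    isGenRowStochastic_inv_diagonal_mul_mul_diagonal hX (fun i => mul_pos hc (hv i)) hu hXu,
    isGenRowStochastic_inv_diagonal_mul_mul_diagonal hY hu hv hYv, ?_, ?_⟩ <;>
  simp only [inv_diagonal_smul (fun i => (hv i).ne'), Matrix.smul_mul, Matrix.mul_smul,
    Matrix.mul_assoc, mul_nonsing_inv_cancel_left (h := hD), mul_nonsing_inv_cancel_left (h := hU)]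

end Matrix

theorem stmt17_general {m n : ℕ}
    (A : Matrix (Fin m) (Fin m) ℝ) (B : Matrix (Fin n) (Fin n) ℝ)
    (hBirr : ∀ i j, ∃ k : ℕ, 0 < (B ^ k) i j)
    (lam : ℝ) (hlam : 0 < lam)
    (v : Fin m → ℝ) (hv : ∀ i, 0 < v i) (hAv : A.mulVec v = lam • v)
    (w : Fin n → ℝ) (hw : ∀ i, 0 < w i) (hBw : B.mulVec w = lam • w)
    (X : Matrix (Fin m) (Fin n) ℝ) (Y : Matrix (Fin n) (Fin m) ℝ)
    (hXnn : ∀ i j, 0 ≤ X i j) (hYnn : ∀ i j, 0 ≤ Y i j)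
    (hA : A = X * Y) (hB : B = Y * X) :
    ∃ (R : Matrix (Fin m) (Fin n) ℝ) (S : Matrix (Fin n) (Fin m) ℝ),
      (∀ i j, 0 ≤ R i j) ∧ (∀ i, ∑ j, R i j = 1) ∧
      (∀ i j, 0 ≤ S i j) ∧ (∀ i, ∑ j, S i j = 1) ∧
      lam⁻¹ • ((Matrix.diagonal v)⁻¹ * A * Matrix.diagonal v) = R * S ∧
      lam⁻¹ • ((Matrix.diagonal w)⁻¹ * B * Matrix.diagonal w) = S * R := by
  subst hA hB
  obtain ⟨t, ht, hYv⟩ := exists_pos_mulVec_eq_smul hXnn hYnn hBirr hlam.ne' hv hAv hw hBw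
  have hXu : X *ᵥ (t • w) = lam • v := by rw [← hYv, mulVec_mulVec, hAv]
  obtain ⟨R, S, hR, hS, hRS, hSR⟩ := exists_isGenRowStochastic_mul_eq hXnn hYnn hlam hv
    (u := t • w) (fun j => mul_pos ht (hw j)) hYv hXu
  refine ⟨R, S, hR.1, hR.2, hS.1, hS.2, hRS.symm, ?_⟩
  rw [hSR, inv_diagonal_smul_mul_mul_diagonal_smul (fun j => (hw j).ne') ht.ne']

/-- Let `A` (m×m) and `B` (n×n) be irreducible nonnegative real matrices,
`λ > 0`, and `v`, `w` positive right eigenvectors of `A`, `B` for `λ`. If `A = XY` and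
`B = YX` with `X`, `Y` nonnegative, then there are generalized row stochastic matrices `R`, `S`
with `𝒮(A) = RS` and `𝒮(B) = SR`, where `𝒮(A) = (1/λ)·D⁻¹AD`, `D = diag(v)`, and
`𝒮(B) = (1/λ)·E⁻¹BE`, `E = diag(w)`. In particular `𝒮(A)` and `𝒮(B)` are elementary strong
shift equivalent over `ℝ₊`. -/
theorem stmt17 {m n : ℕ}
    (A : Matrix (Fin m) (Fin m) ℝ) (B : Matrix (Fin n) (Fin n) ℝ)
    (hAnn : ∀ i j, 0 ≤ A i j) (hAirr : ∀ i j, ∃ k : ℕ, 0 < (A ^ k) i j)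
    (hBnn : ∀ i j, 0 ≤ B i j) (hBirr : ∀ i j, ∃ k : ℕ, 0 < (B ^ k) i j)
    (lam : ℝ) (hlam : 0 < lam)
    (v : Fin m → ℝ) (hv : ∀ i, 0 < v i) (hAv : A.mulVec v = lam • v)
    (w : Fin n → ℝ) (hw : ∀ i, 0 < w i) (hBw : B.mulVec w = lam • w)
    (X : Matrix (Fin m) (Fin n) ℝ) (Y : Matrix (Fin n) (Fin m) ℝ)
    (hXnn : ∀ i j, 0 ≤ X i j) (hYnn : ∀ i j, 0 ≤ Y i j)
    (hA : A = X * Y) (hB : B = Y * X) :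
    ∃ (R : Matrix (Fin m) (Fin n) ℝ) (S : Matrix (Fin n) (Fin m) ℝ),
      (∀ i j, 0 ≤ R i j) ∧ (∀ i, ∑ j, R i j = 1) ∧
      (∀ i j, 0 ≤ S i j) ∧ (∀ i, ∑ j, S i j = 1) ∧
      lam⁻¹ • ((Matrix.diagonal v)⁻¹ * A * Matrix.diagonal v) = R * S ∧
      lam⁻¹ • ((Matrix.diagonal w)⁻¹ * B * Matrix.diagonal w) = S * R :=
  stmt17_general A B hBirr lam hlam v hv hAv w hw hBw X Y hXnn hYnn hA hB
end
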